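/- (Chvátal–Thomassen) Every 2-edge connected graph of radius r admits a strong orientation of radius at most r² + r. -/

import Mathlib

/-!
Induction on `k`, for a vertex set `S` within distance `k` of every vertex: there is a partial
orientation, leaving the edges inside `S` alone, in which every vertex is reached from `S` and
reaches `S` within `k² + k` steps. The theorem is the case `S = {centre}`.

In the inductive step every neighbour `x ∉ S` of some `s ∈ S` is put on a directed ear. As `sx`
is not a bridge, there is a shortest path from `x` back to `S` avoiding `sx`, and domination bounds
its length by `2k`. Together with `sx`, its initial segment up to the first vertex already in `S`
or on an earlier ear is oriented, in the direction in which the earlier ears continue it back to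
`S` no later than the path itself does. Then every vertex on an ear is within `2k` of `S` in both
directions, the vertices on ears together with `S` lie within `k - 1` of every vertex, and
`2k + (k - 1)² + (k - 1) = k² + k`.
-/

/-- There is a directed walk of length at most `n` from `u` to `v` along the relation `D`. -/
def DiPathLE {V : Type*} (D : V → V → Prop) (u v : V) (n : ℕ) : Prop :=
  ∃ m ≤ n, ∃ f : ℕ → V, f 0 = u ∧ f m = v ∧ ∀ i < m, D (f i) (f (i + 1))

/-- `O` is an orientation of `G`: every arc of `O` is an edge of `G`, and every edge of `G`
gets exactly one of the two possible directions. -/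
def IsOrientation {V : Type*} (G : SimpleGraph V) (O : V → V → Prop) : Prop :=
  (∀ u v, O u v → G.Adj u v) ∧ ∀ u v, G.Adj u v → (O u v ↔ ¬ O v u)

/-- `G` is 2-edge connected: connected and without bridges. -/
def TwoEdgeConnected {V : Type*} (G : SimpleGraph V) : Prop :=
  G.Connected ∧ ∀ e, ¬ G.IsBridge e

/-- `G` has diameter exactly `d`. -/
def HasDiam {V : Type*} (G : SimpleGraph V) (d : ℕ) : Prop :=
  G.Connected ∧ (∀ u v, G.dist u v ≤ d) ∧ ∃ u v, G.dist u v = d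

/-- `B` is a `k`-step dominating set of `G`. -/
def KStepDom {V : Type*} (G : SimpleGraph V) (B : Set V) (k : ℕ) : Prop :=
  ∀ v, ∃ u ∈ B, ∃ w : G.Walk v u, w.length ≤ k

/-- `D` is an oriented subgraph of `G` with vertex set `S`: every arc of `D` is an
orientation of an edge of `G` with both endpoints in `S`, and no edge receives
both directions. -/
def IsOrientedSubgraph {V : Type*} (G : SimpleGraph V) (S : Set V) (D : V → V → Prop) : Prop :=
  (∀ u v, D u v → G.Adj u v ∧ u ∈ S ∧ v ∈ S) ∧ ∀ u v, ¬ (D u v ∧ D v u)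

/-- The setoid identifying all the vertices of `B`. -/
def contractSetoid {V : Type*} (B : Set V) : Setoid V where
  r x y := x = y ∨ (x ∈ B ∧ y ∈ B)
  iseqv := by
    refine ⟨fun _ => Or.inl rfl, ?_, ?_⟩
    · rintro x y (rfl | h)
      · exact Or.inl rfl
      · exact Or.inr ⟨h.2, h.1⟩
    · rintro x y z (rfl | h1) (rfl | h2)
      · exact Or.inl rfl
      · exact Or.inr h2
      · exact Or.inr h1
      · exact Or.inr ⟨h1.1, h2.2⟩

/-- The graph `G/B` obtained from `G` by contracting the set `B` to a single vertex
(removing resulting loops). -/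
def contractGraph {V : Type*} (G : SimpleGraph V) (B : Set V) :
    SimpleGraph (Quotient (contractSetoid B)) where
  Adj a b := a ≠ b ∧ ∃ x y, Quotient.mk (contractSetoid B) x = a ∧
    Quotient.mk (contractSetoid B) y = b ∧ G.Adj x y
  symm := by
    constructor
    rintro a b ⟨hne, x, y, hx, hy, hadj⟩
    exact ⟨hne.symm, y, x, hy, hx, hadj.symm⟩
  loopless := by
    constructor
    rintro a ⟨hne, -⟩
    exact hne rfl

/-- `k` is the length of a shortest cycle of `G` containing the edge `pq`. -/
def ShortestCycleThroughEdge {V : Type*} (G : SimpleGraph V) (p q : V) (k : ℕ) : Prop :=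
  (∃ (a : V) (c : G.Walk a a), c.IsCycle ∧ s(p, q) ∈ c.edges ∧ c.length = k) ∧
  ∀ (a : V) (c : G.Walk a a), c.IsCycle → s(p, q) ∈ c.edges → k ≤ c.length

/-- `G` has radius exactly `r`. -/
def HasRadius {V : Type*} (G : SimpleGraph V) (r : ℕ) : Prop :=
  G.Connected ∧ (∃ v, ∀ u, G.dist v u ≤ r) ∧ ∀ v, ∃ u, r ≤ G.dist v u

section DiPathLE

variable {V : Type*} {R R' : V → V → Prop} {u v w : V} {m n : ℕ}

theorem DiPathLE.refl (R : V → V → Prop) (u : V) (n : ℕ) : DiPathLE R u u n :=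
  ⟨0, n.zero_le, fun _ => u, rfl, rfl, fun _ hi => absurd hi (Nat.not_lt_zero _)⟩

theorem DiPathLE.mono (hR : R ≤ R') (hmn : m ≤ n) (h : DiPathLE R u v m) :
    DiPathLE R' u v n := by
  obtain ⟨l, hl, f, hf0, hfl, hf⟩ := h
  exact ⟨l, hl.trans hmn, f, hf0, hfl, fun i hi => hR _ _ (hf i hi)⟩

theorem DiPathLE.of_chain {f : ℕ → V} (hf : ∀ i < m, R (f i) (f (i + 1))) {i j : ℕ}
    (hij : i ≤ j) (hjm : j ≤ m) : DiPathLE R (f i) (f j) (j - i) :=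
  ⟨j - i, le_rfl, fun t => f (i + t), rfl, congrArg f (Nat.add_sub_cancel' hij),
    fun t _ => hf (i + t) (by omega)⟩

theorem DiPathLE.trans (h₁ : DiPathLE R u v m) (h₂ : DiPathLE R v w n) :
    DiPathLE R u w (m + n) := by
  obtain ⟨a, ha, f, hf0, hfa, hf⟩ := h₁
  obtain ⟨b, hb, g, hg0, hgb, hg⟩ := h₂
  refine ⟨a + b, by omega, fun i => if i < a then f i else g (i - a), ?_, ?_, fun i hi => ?_⟩
  · grind
  · grind
  · rcases Nat.lt_or_ge (i + 1) a with h | h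
    · grind
    · rcases Nat.lt_or_ge i a with h' | h'
      · have : i + 1 = a := by omega
        grind
      · have := hg (i - a) (by omega)
        grind

theorem DiPathLE.swap (h : DiPathLE R u v n) : DiPathLE (Function.swap R) v u n := by
  obtain ⟨m, hm, f, hf0, hfm, hf⟩ := h
  refine ⟨m, hm, fun i => f (m - i), by simpa, by simpa, fun i hi => ?_⟩
  have := hf (m - (i + 1)) (by omega)
  rwa [show m - (i + 1) + 1 = m - i by omega] at this

theorem diPathLE_swap : DiPathLE (Function.swap R) u v n ↔ DiPathLE R v u n :=
  ⟨DiPathLE.swap, DiPathLE.swap⟩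

end DiPathLE

section SetDistance

variable {V : Type*} {D D' : V → V → Prop} {S : Set V} {u w : V} {m n : ℕ}

def DiPathFromLE (D : V → V → Prop) (S : Set V) (w : V) (n : ℕ) : Prop :=
  ∃ t ∈ S, DiPathLE D t w n

def DiPathToLE (D : V → V → Prop) (w : V) (S : Set V) (n : ℕ) : Prop :=
  ∃ t ∈ S, DiPathLE D w t n

theorem DiPathFromLE.of_mem (hw : w ∈ S) : DiPathFromLE D S w n :=
  ⟨w, hw, DiPathLE.refl D w n⟩

theorem DiPathToLE.of_mem (hw : w ∈ S) : DiPathToLE D w S n :=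
  ⟨w, hw, DiPathLE.refl D w n⟩

theorem DiPathFromLE.mono (hD : D ≤ D') (hmn : m ≤ n) (h : DiPathFromLE D S w m) :
    DiPathFromLE D' S w n :=
  let ⟨t, ht, h⟩ := h; ⟨t, ht, h.mono hD hmn⟩

theorem DiPathToLE.mono (hD : D ≤ D') (hmn : m ≤ n) (h : DiPathToLE D w S m) :
    DiPathToLE D' w S n :=
  let ⟨t, ht, h⟩ := h; ⟨t, ht, h.mono hD hmn⟩

theorem DiPathFromLE.trans (h₁ : DiPathFromLE D S u m) (h₂ : DiPathLE D u w n) :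
    DiPathFromLE D S w (m + n) :=
  let ⟨t, ht, h⟩ := h₁; ⟨t, ht, h.trans h₂⟩

theorem DiPathToLE.trans (h₁ : DiPathLE D w u m) (h₂ : DiPathToLE D u S n) :
    DiPathToLE D w S (m + n) :=
  let ⟨t, ht, h⟩ := h₂; ⟨t, ht, h₁.trans h⟩

theorem diPathFromLE_swap : DiPathFromLE (Function.swap D) S w n ↔ DiPathToLE D w S n := by
  simp only [DiPathFromLE, DiPathToLE, diPathLE_swap]

theorem diPathToLE_swap : DiPathToLE (Function.swap D) w S n ↔ DiPathFromLE D S w n := by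
  simp only [DiPathFromLE, DiPathToLE, diPathLE_swap]

end SetDistance

section ArcSupport

variable {V : Type*} {D D' : V → V → Prop} {a b : V}

def arcSupport (D : V → V → Prop) : Set V := {w | ∃ z, D w z ∨ D z w}

theorem left_mem_arcSupport (h : D a b) : a ∈ arcSupport D := ⟨b, Or.inl h⟩

theorem right_mem_arcSupport (h : D a b) : b ∈ arcSupport D := ⟨a, Or.inr h⟩

theorem arcSupport_mono (h : D ≤ D') : arcSupport D ⊆ arcSupport D' := by
  rintro w ⟨z, hz | hz⟩
  exacts [⟨z, Or.inl (h _ _ hz)⟩, ⟨z, Or.inr (h _ _ hz)⟩]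

@[simp]
theorem arcSupport_swap : arcSupport (Function.swap D) = arcSupport D := by
  ext w; exact exists_congr fun z => or_comm

theorem arcSupport_sup : arcSupport (D ⊔ D') = arcSupport D ∪ arcSupport D' := by
  ext w
  simp only [arcSupport, Set.mem_ofPred_eq, Set.mem_union, Pi.sup_apply, sup_Prop_eq]
  grind

end ArcSupport

theorem KStepDom.of_succ {V : Type*} {G : SimpleGraph V} {S T : Set V} {k : ℕ}
    (h : KStepDom G S (k + 1)) (hST : S ⊆ T) (hT : ∀ s ∈ S, ∀ x, G.Adj x s → x ∈ T) :
    KStepDom G T k := by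
  intro v
  obtain ⟨u, hu, w, hw⟩ := h v
  by_cases hnil : w.Nil
  · exact ⟨v, hST (hnil.eq ▸ hu), .nil, Nat.zero_le _⟩
  · exact ⟨w.penultimate, hT u hu _ (w.adj_penultimate hnil), w.dropLast,
      by rw [SimpleGraph.Walk.length_dropLast]; omega⟩

namespace SimpleGraph.Walk

variable {V : Type*} {G : SimpleGraph V} {u v a b : V}

def dartRel (E : G.Walk u v) (a b : V) : Prop :=
  ∃ i < E.length, E.getVert i = a ∧ E.getVert (i + 1) = b

theorem adj_of_dartRel {E : G.Walk u v} (h : E.dartRel a b) : G.Adj a b := by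
  obtain ⟨i, hi, rfl, rfl⟩ := h
  exact E.adj_getVert_succ hi

theorem IsTrail.dartRel_asymm {E : G.Walk u v} (hE : E.IsTrail) (hab : E.dartRel a b) :
    ¬ E.dartRel b a := by
  rintro ⟨j, hj, rfl, rfl⟩
  obtain ⟨i, hi, hia, hib⟩ := hab
  have hij : i = j := by
    refine (hE.edges_nodup.getElem_inj_iff (hi := by simpa) (hj := by simpa)).mp ?_
    rw [getElem_edges, getElem_edges, hia, hib, Sym2.eq_swap]
  subst hij
  exact (E.adj_getVert_succ hi).ne hia

theorem diPathLE_dartRel (E : G.Walk u v) {i j : ℕ} (hij : i ≤ j) (hj : j ≤ E.length) :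
    DiPathLE E.dartRel (E.getVert i) (E.getVert j) (j - i) :=
  DiPathLE.of_chain (fun i hi => ⟨i, hi, rfl, rfl⟩) hij hj

theorem exists_getVert_eq_of_mem_arcSupport {E : G.Walk u v} {w : V}
    (hw : w ∈ arcSupport E.dartRel) : ∃ j ≤ E.length, E.getVert j = w := by
  obtain ⟨z, ⟨i, hi, rfl, -⟩ | ⟨i, hi, -, rfl⟩⟩ := hw
  exacts [⟨i, hi.le, rfl⟩, ⟨i + 1, hi, rfl⟩]

theorem notMem_or_notMem_of_dartRel {T : Set V} {E : G.Walk u v} (hL : 2 ≤ E.length)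
    (hT : ∀ j, 0 < j → j < E.length → E.getVert j ∉ T) (hab : E.dartRel a b) :
    a ∉ T ∨ b ∉ T := by
  obtain ⟨i, hi, rfl, rfl⟩ := hab
  rcases Nat.eq_zero_or_pos i with rfl | hi0
  exacts [Or.inr (hT 1 one_pos (by omega)), Or.inl (hT i hi0 hi)]

end SimpleGraph.Walk

namespace SimpleGraph

variable {V : Type*} {G : SimpleGraph V} {k : ℕ} {S : Set V} {D D₁ D₂ : V → V → Prop}

section ShortestEar

variable {s x : V}

-- Since `s ∈ S`, a walk to `S` can only use the edge `sx` after passing through `x`.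
theorem Walk.exists_deleteEdges_walk_to_set_or_to_endpoint (hs : s ∈ S) {z t : V}
    (ht : t ∈ S) (P : G.Walk z t) :
    (∃ t' ∈ S, ∃ Q : (G.deleteEdges {s(s, x)}).Walk z t', Q.length ≤ P.length) ∨
      ∃ Q : (G.deleteEdges {s(s, x)}).Walk z x, Q.length < P.length := by
  induction P with
  | nil => exact Or.inl ⟨_, ht, nil, le_rfl⟩
  | @cons z y t hzy P ih =>
    by_cases hz : z ∈ S
    · exact Or.inl ⟨z, hz, nil, Nat.zero_le _⟩
    by_cases he : s(z, y) = s(s, x)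
    · have hzx : z = x := by
        rcases Sym2.eq_iff.mp he with ⟨rfl, -⟩ | ⟨rfl, -⟩
        exacts [absurd hs hz, rfl]
      subst hzx
      exact Or.inr ⟨nil, Nat.succ_pos _⟩
    have hzy' : (G.deleteEdges {s(s, x)}).Adj z y := (deleteEdges_adj ..).mpr ⟨hzy, he⟩
    rcases ih ht with ⟨t', ht', Q, hQ⟩ | ⟨Q, hQ⟩
    · exact Or.inl ⟨t', ht', cons hzy' Q, by simpa using hQ⟩
    · exact Or.inr ⟨cons hzy' Q, by simpa using hQ⟩

theorem exists_isPath_shortest_to_set (H : SimpleGraph V) {x t₀ : V} (ht₀ : t₀ ∈ S)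
    (h : H.Reachable x t₀) :
    ∃ t ∈ S, ∃ P : H.Walk x t, P.IsPath ∧ ∀ t' ∈ S, ∀ Q : H.Walk x t', P.length ≤ Q.length := by
  classical
  have hex : ∃ n, ∃ t ∈ S, ∃ P : H.Walk x t, P.length = n :=
    let ⟨P⟩ := h; ⟨_, t₀, ht₀, P, rfl⟩
  obtain ⟨t, ht, P, hP⟩ := Nat.find_spec hex
  refine ⟨t, ht, P.bypass, P.bypass_isPath, fun t' ht' Q => ?_⟩
  calc P.bypass.length ≤ P.length := P.length_bypass_le_length
    _ ≤ Q.length := hP ▸ Nat.find_min' hex ⟨t', ht', Q, rfl⟩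

theorem Walk.length_le_of_shortest (hs : s ∈ S) {t : V} (ht : t ∈ S)
    (P : (G.deleteEdges {s(s, x)}).Walk x t)
    (hmin : ∀ t' ∈ S, ∀ Q : (G.deleteEdges {s(s, x)}).Walk x t', P.length ≤ Q.length)
    {i : ℕ} (hi : i ≤ P.length) {t' : V} (ht' : t' ∈ S) (Q : G.Walk (P.getVert i) t') :
    P.length ≤ i + Q.length ∨ i < Q.length := by
  rcases Q.exists_deleteEdges_walk_to_set_or_to_endpoint (x := x) hs ht' with
    ⟨t'', ht'', R, hR⟩ | ⟨R, hR⟩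
  · left
    have := hmin t'' ht'' ((P.take i).append R)
    rw [length_append, take_length, min_eq_left hi] at this
    omega
  · right
    have := hmin t ht (R.reverse.append (P.drop i))
    rw [length_append, length_reverse, drop_length] at this
    omega

theorem Walk.length_le_two_mul_of_shortest (hs : s ∈ S) {t : V} (ht : t ∈ S)
    (P : (G.deleteEdges {s(s, x)}).Walk x t)
    (hmin : ∀ t' ∈ S, ∀ Q : (G.deleteEdges {s(s, x)}).Walk x t', P.length ≤ Q.length)
    (hdom : KStepDom G S k) : P.length ≤ 2 * k := by
  by_contra h
  obtain ⟨t', ht', Q, hQ⟩ := hdom (P.getVert k)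
  rcases P.length_le_of_shortest hs ht hmin (i := k) (by omega) ht' Q with h' | h' <;> omega

theorem Walk.exists_isTrail_cons_take {t : V} (hsx : G.Adj s x)
    (P : (G.deleteEdges {s(s, x)}).Walk x t) (hP : P.IsPath) {p : ℕ} (hp : p ≤ P.length) :
    ∃ E : G.Walk s (P.getVert p), E.IsTrail ∧ E.length = p + 1 ∧
      ∀ j ≤ p, E.getVert (j + 1) = P.getVert j := by
  refine ⟨cons hsx ((P.take p).mapLe (deleteEdges_le _)), ?_, ?_, fun j hj => ?_⟩
  · rw [isTrail_cons, isTrail_mapLe, edges_mapLe_eq_edges]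
    refine ⟨(hP.take p).isTrail, fun he => ?_⟩
    have := (P.take p).edges_subset_edgeSet he
    simp [edgeSet_deleteEdges] at this
  · simp [take_length, hp]
  · rw [getVert_cons_succ, mapLe, getVert_map, take_getVert, min_eq_right hj]
    rfl

end ShortestEar

structure IsPartialOrientation (G : SimpleGraph V) (S : Set V) (D : V → V → Prop) : Prop where
  adj ⦃a b : V⦄ : D a b → G.Adj a b
  asymm ⦃a b : V⦄ : D a b → ¬ D b a
  notMem_of_mem ⦃a b : V⦄ : D a b → a ∈ S → b ∉ S

theorem isPartialOrientation_bot : G.IsPartialOrientation S ⊥ :=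
  ⟨fun _ _ h => h.elim, fun _ _ h => h.elim, fun _ _ h => h.elim⟩

theorem IsPartialOrientation.swap (hD : G.IsPartialOrientation S D) :
    G.IsPartialOrientation S (Function.swap D) :=
  ⟨fun _ _ h => (hD.adj h).symm, fun _ _ h => hD.asymm h,
    fun _ _ h ha hb => hD.notMem_of_mem h hb ha⟩

theorem IsPartialOrientation.sup (h₁ : G.IsPartialOrientation S D₁)
    (h₂ : G.IsPartialOrientation (S ∪ arcSupport D₁) D₂) :
    G.IsPartialOrientation S (D₁ ⊔ D₂) := by
  refine ⟨fun a b h => h.elim (h₁.adj ·) (h₂.adj ·), fun a b h h' => ?_,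
    fun a b h ha => h.elim (h₁.notMem_of_mem · ha) fun h hb => ?_⟩
  · rcases h with h | h <;> rcases h' with h' | h'
    · exact h₁.asymm h h'
    · exact h₂.notMem_of_mem h' (.inr (right_mem_arcSupport h)) (.inr (left_mem_arcSupport h))
    · exact h₂.notMem_of_mem h (.inr (right_mem_arcSupport h')) (.inr (left_mem_arcSupport h'))
    · exact h₂.asymm h h'
  · exact h₂.notMem_of_mem h (.inl ha) (.inl hb)

theorem IsPartialOrientation.sup_dartRel (hD : G.IsPartialOrientation S D) {u v : V}
    {E : G.Walk u v} (hE : E.IsTrail) (hL : 2 ≤ E.length)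
    (hfresh : ∀ j, 0 < j → j < E.length → E.getVert j ∉ S ∪ arcSupport D) :
    G.IsPartialOrientation S (D ⊔ E.dartRel) := by
  refine ⟨fun a b h => h.elim (hD.adj ·) Walk.adj_of_dartRel, fun a b h h' => ?_,
    fun a b h ha hb => ?_⟩
  · rcases h with h | h <;> rcases h' with h' | h'
    · exact hD.asymm h h'
    · rcases Walk.notMem_or_notMem_of_dartRel hL hfresh h' with hb | ha
      exacts [hb (.inr (right_mem_arcSupport h)), ha (.inr (left_mem_arcSupport h))]
    · rcases Walk.notMem_or_notMem_of_dartRel hL hfresh h with ha | hb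
      exacts [ha (.inr (right_mem_arcSupport h')), hb (.inr (left_mem_arcSupport h'))]
    · exact hE.dartRel_asymm h h'
  · rcases h with h | h
    · exact hD.notMem_of_mem h ha hb
    · rcases Walk.notMem_or_notMem_of_dartRel hL hfresh h with ha' | hb'
      exacts [ha' (.inl ha), hb' (.inl hb)]

theorem IsPartialOrientation.exists_isOrientation_le (hD : G.IsPartialOrientation S D) :
    ∃ O, IsOrientation G O ∧ D ≤ O := by
  refine ⟨fun a b => D a b ∨ (G.Adj a b ∧ ¬ D b a ∧ WellOrderingRel a b),
    ⟨fun a b h => h.elim (hD.adj ·) (·.1), fun a b hab => ⟨?_, fun h => ?_⟩⟩, fun _ _ => Or.inl⟩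
  · rintro (h | ⟨-, hba, hwo⟩) (h' | ⟨-, hab', hwo'⟩)
    exacts [hD.asymm h h', hab' h, hba h', asymm_of WellOrderingRel hwo hwo']
  · rw [not_or, not_and, not_and] at h
    by_cases hD' : D a b
    · exact Or.inl hD'
    · refine Or.inr ⟨hab, h.1, ?_⟩
      rcases trichotomous_of WellOrderingRel a b with h' | rfl | h'
      exacts [h', absurd hab G.irrefl, absurd h' (h.2 hab.symm hD')]

-- `shortcut` is what decides the direction of each new ear (see `exists_le_of_ear`).
structure IsEarOrientation (G : SimpleGraph V) (k : ℕ) (S : Set V) (D : V → V → Prop) : Prop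
    extends G.IsPartialOrientation S D where
  reach : ∀ w ∈ arcSupport D, DiPathFromLE D S w (2 * k) ∧ DiPathToLE D w S (2 * k)
  shortcut : ∀ w ∈ arcSupport D, ∀ t ∈ S, ∀ Q : G.Walk w t,
    DiPathFromLE D S w Q.length ∨ DiPathToLE D w S Q.length

theorem isEarOrientation_bot : G.IsEarOrientation k S ⊥ :=
  ⟨isPartialOrientation_bot, fun _ ⟨_, h⟩ => absurd h (by simp),
    fun _ ⟨_, h⟩ => absurd h (by simp)⟩

theorem IsEarOrientation.swap (hD : G.IsEarOrientation k S D) :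
    G.IsEarOrientation k S (Function.swap D) := by
  refine ⟨hD.toIsPartialOrientation.swap, fun w hw => ?_, fun w hw t ht Q => ?_⟩
  · rw [arcSupport_swap] at hw
    exact ⟨diPathFromLE_swap.mpr (hD.reach w hw).2, diPathToLE_swap.mpr (hD.reach w hw).1⟩
  · rw [arcSupport_swap] at hw
    exact (hD.shortcut w hw t ht Q).symm.imp diPathFromLE_swap.mpr diPathToLE_swap.mpr

theorem IsEarOrientation.shortcut_of_mem_union (hD : G.IsEarOrientation k S D) {w t : V}
    (hw : w ∈ S ∪ arcSupport D) (ht : t ∈ S) (Q : G.Walk w t) :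
    DiPathFromLE D S w Q.length ∨ DiPathToLE D w S Q.length :=
  hw.elim (fun hw => Or.inl (.of_mem hw)) (hD.shortcut w · t ht Q)

theorem mem_arcSupport_sup_dartRel {s y w : V} (hs : s ∈ S) {E : G.Walk s y}
    (hy : y ∈ S ∪ arcSupport D) (hw : w ∈ arcSupport (D ⊔ E.dartRel)) :
    w ∈ S ∪ arcSupport D ∨ ∃ j, 0 < j ∧ j < E.length ∧ E.getVert j = w := by
  rw [arcSupport_sup] at hw
  rcases hw with hw | hw
  · exact Or.inl (Or.inr hw)
  obtain ⟨j, hj, rfl⟩ := E.exists_getVert_eq_of_mem_arcSupport hw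
  rcases Nat.eq_zero_or_pos j with rfl | hj0
  · exact Or.inl (Or.inl (by rwa [E.getVert_zero]))
  rcases hj.lt_or_eq with hj | rfl
  · exact Or.inr ⟨j, hj0, hj, rfl⟩
  · exact Or.inl (by rwa [E.getVert_length])

theorem IsEarOrientation.sup_dartRel (hD : G.IsEarOrientation k S D) {s y : V} (hs : s ∈ S)
    {E : G.Walk s y} (hE : E.IsTrail) (hL : 2 ≤ E.length)
    (hfresh : ∀ j, 0 < j → j < E.length → E.getVert j ∉ S ∪ arcSupport D)
    (hy : y ∈ S ∪ arcSupport D) {b : ℕ} (hyS : DiPathToLE D y S b)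
    (hb : E.length + b ≤ 2 * k + 1)
    (hshort : ∀ j, 0 < j → j < E.length → ∀ t ∈ S, ∀ Q : G.Walk (E.getVert j) t,
      j ≤ Q.length ∨ E.length - j + b ≤ Q.length) :
    G.IsEarOrientation k S (D ⊔ E.dartRel) := by
  have hDle : D ≤ D ⊔ E.dartRel := le_sup_left
  have hfrom (j : ℕ) (hj : j ≤ E.length) : DiPathFromLE (D ⊔ E.dartRel) S (E.getVert j) j :=
    ⟨s, hs, by simpa using (E.diPathLE_dartRel j.zero_le hj).mono le_sup_right le_rfl⟩
  have hto (j : ℕ) (hj : j ≤ E.length) :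
      DiPathToLE (D ⊔ E.dartRel) (E.getVert j) S (E.length - j + b) := by
    have : DiPathLE (D ⊔ E.dartRel) (E.getVert j) y (E.length - j) := by
      simpa using (E.diPathLE_dartRel hj le_rfl).mono le_sup_right le_rfl
    exact DiPathToLE.trans this (hyS.mono hDle le_rfl)
  refine ⟨hD.toIsPartialOrientation.sup_dartRel hE hL hfresh, fun w hw => ?_,
    fun w hw t ht Q => ?_⟩
  · rcases mem_arcSupport_sup_dartRel hs hy hw with (hw | hw) | ⟨j, hj0, hj, rfl⟩
    · exact ⟨.of_mem hw, .of_mem hw⟩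
    · exact ⟨(hD.reach w hw).1.mono hDle le_rfl, (hD.reach w hw).2.mono hDle le_rfl⟩
    · exact ⟨(hfrom j hj.le).mono le_rfl (by omega), (hto j hj.le).mono le_rfl (by omega)⟩
  · rcases mem_arcSupport_sup_dartRel hs hy hw with hw | ⟨j, hj0, hj, rfl⟩
    · exact (hD.shortcut_of_mem_union hw ht Q).imp (·.mono hDle le_rfl) (·.mono hDle le_rfl)
    · rcases hshort j hj0 hj t ht Q with h | h
      exacts [Or.inl ((hfrom j hj.le).mono le_rfl h), Or.inr ((hto j hj.le).mono le_rfl h)]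

theorem IsEarOrientation.exists_le_of_ear (hD : G.IsEarOrientation k S D) {s y t : V}
    (hs : s ∈ S) {E : G.Walk s y} (hE : E.IsTrail) (hL : 2 ≤ E.length)
    (hfresh : ∀ j, 0 < j → j < E.length → E.getVert j ∉ S ∪ arcSupport D)
    (hy : y ∈ S ∪ arcSupport D) (ht : t ∈ S) (Q : G.Walk y t)
    (hb : E.length + Q.length ≤ 2 * k + 1)
    (hshort : ∀ j, 0 < j → j < E.length → ∀ t ∈ S, ∀ Q' : G.Walk (E.getVert j) t,
      j ≤ Q'.length ∨ E.length - j + Q.length ≤ Q'.length) :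
    ∃ D', D ≤ D' ∧ G.IsEarOrientation k S D' ∧ arcSupport E.dartRel ⊆ arcSupport D' := by
  rcases hD.shortcut_of_mem_union hy ht Q with hin | hout
  · -- `D` is only known to reach `y` from `S` quickly: orient the ear from `y` back to `s`.
    have hD' := hD.swap.sup_dartRel hs hE hL (by simpa using hfresh) (by simpa using hy)
      (diPathToLE_swap.mpr hin) hb hshort
    refine ⟨Function.swap (Function.swap D ⊔ E.dartRel), fun _ _ h => Or.inl h, hD'.swap, ?_⟩
    rw [arcSupport_swap]
    exact arcSupport_mono le_sup_right
  · exact ⟨D ⊔ E.dartRel, le_sup_left, hD.sup_dartRel hs hE hL hfresh hy hout hb hshort,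
      arcSupport_mono le_sup_right⟩

theorem IsEarOrientation.exists_le_mem_arcSupport (hD : G.IsEarOrientation k S D)
    (hdom : KStepDom G S k) {s x : V} (hs : s ∈ S) (hx : x ∉ S) (hsx : G.Adj s x)
    (hxD : x ∉ arcSupport D) (hbr : ¬ G.IsBridge s(s, x)) :
    ∃ D', D ≤ D' ∧ G.IsEarOrientation k S D' ∧ x ∈ arcSupport D' := by
  classical
  obtain ⟨t, ht, P, hP, hmin⟩ := exists_isPath_shortest_to_set (G.deleteEdges {s(s, x)}) hs
    (not_not.mp (isBridge_iff.not.mp hbr)).symm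
  have hq := P.length_le_two_mul_of_shortest hs ht hmin hdom
  have hq0 : 0 < P.length := by
    refine Nat.pos_of_ne_zero fun h => hx ?_
    rwa [P.eq_of_length_eq_zero h]
  have hqT : P.getVert P.length ∈ S ∪ arcSupport D := by simp [ht]
  obtain ⟨p, ⟨hp0, hpT⟩, hpmin⟩ : ∃ p, (0 < p ∧ P.getVert p ∈ S ∪ arcSupport D) ∧
      ∀ m < p, ¬ (0 < m ∧ P.getVert m ∈ S ∪ arcSupport D) :=
    have hex : ∃ p, 0 < p ∧ P.getVert p ∈ S ∪ arcSupport D := ⟨_, hq0, hqT⟩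
    ⟨Nat.find hex, Nat.find_spec hex, fun _ => Nat.find_min hex⟩
  have hpq : p ≤ P.length := not_lt.mp fun h => hpmin _ h ⟨hq0, hqT⟩
  obtain ⟨E, hE, hEl, hEv⟩ := P.exists_isTrail_cons_take hsx hP hpq
  have hEv' (j : ℕ) (hj0 : 0 < j) (hj : j < E.length) : E.getVert j = P.getVert (j - 1) := by
    simpa [Nat.sub_add_cancel hj0] using hEv (j - 1) (by omega)
  have hfresh (j : ℕ) (hj0 : 0 < j) (hj : j < E.length) : E.getVert j ∉ S ∪ arcSupport D := by
    rw [hEv' j hj0 hj]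
    rcases Nat.eq_zero_or_pos (j - 1) with h | h
    · rw [h, P.getVert_zero]
      exact fun h' => h'.elim hx hxD
    · exact fun h' => hpmin (j - 1) (by omega) ⟨h, h'⟩
  have hshort (j : ℕ) (hj0 : 0 < j) (hj : j < E.length) (t' : V) (ht' : t' ∈ S)
      (Q : G.Walk (E.getVert j) t') : j ≤ Q.length ∨ E.length - j + (P.length - p) ≤ Q.length := by
    have := P.length_le_of_shortest hs ht hmin (i := j - 1) (by omega) ht'
      (Q.copy (hEv' j hj0 hj) rfl)
    rw [Walk.length_copy] at this
    omega
  obtain ⟨D', hDD', hD', hsupp⟩ := hD.exists_le_of_ear hs hE (by omega) hfresh hpT ht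
    ((P.drop p).mapLe (deleteEdges_le _)) (by simp [Walk.drop_length]; omega)
    (by simpa [Walk.drop_length] using hshort)
  refine ⟨D', hDD', hD', hsupp (right_mem_arcSupport ⟨0, by omega, rfl, ?_⟩)⟩
  simpa using hEv 0 (Nat.zero_le _)

theorem exists_isEarOrientation_forall_adj_mem [Finite V] (hbr : ∀ e, ¬ G.IsBridge e)
    (hdom : KStepDom G S k) :
    ∃ D, G.IsEarOrientation k S D ∧ ∀ s ∈ S, ∀ x, G.Adj s x → x ∈ S ∪ arcSupport D := by
  obtain ⟨D, hD, hmax⟩ := Set.exists_max_image {D | G.IsEarOrientation k S D}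
    (fun D => (arcSupport D).ncard) (Set.toFinite _) ⟨⊥, isEarOrientation_bot⟩
  refine ⟨D, hD, fun s hs x hsx => not_not.mp fun hx => ?_⟩
  rw [Set.mem_union, not_or] at hx
  obtain ⟨D', hDD', hD', hxD'⟩ := hD.exists_le_mem_arcSupport hdom hs hx.1 hsx hx.2 (hbr _)
  have hlt : arcSupport D ⊂ arcSupport D' :=
    (Set.ssubset_iff_of_subset (arcSupport_mono hDD')).mpr ⟨x, hxD', hx.2⟩
  exact (hmax D' hD').not_gt (Set.ncard_lt_ncard hlt (Set.toFinite _))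

theorem exists_isPartialOrientation_diPathLE [Finite V] (hbr : ∀ e, ¬ G.IsBridge e)
    (hdom : KStepDom G S k) : ∃ D, G.IsPartialOrientation S D ∧
      ∀ u, DiPathFromLE D S u (k ^ 2 + k) ∧ DiPathToLE D u S (k ^ 2 + k) := by
  induction k generalizing S with
  | zero =>
    refine ⟨⊥, isPartialOrientation_bot, fun u => ?_⟩
    obtain ⟨t, ht, w, hw⟩ := hdom u
    rw [w.eq_of_length_eq_zero (Nat.le_zero.mp hw)]
    exact ⟨.of_mem ht, .of_mem ht⟩
  | succ k ih =>
    obtain ⟨D₁, hD₁, hcover⟩ := exists_isEarOrientation_forall_adj_mem hbr hdom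
    obtain ⟨D₂, hD₂, hreach⟩ := ih
      (KStepDom.of_succ hdom Set.subset_union_left fun s hs x hxs => hcover s hs x hxs.symm)
    have hlen : (k + 1) ^ 2 + (k + 1) = 2 * (k + 1) + (k ^ 2 + k) := by ring
    refine ⟨D₁ ⊔ D₂, hD₁.sup hD₂, fun u => ⟨?_, ?_⟩⟩
    · obtain ⟨t, ht | ht, h⟩ := (hreach u).1
      · exact ⟨t, ht, h.mono le_sup_right (by omega)⟩
      · rw [hlen]
        exact DiPathFromLE.trans ((hD₁.reach t ht).1.mono le_sup_left le_rfl)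
          (h.mono le_sup_right le_rfl)
    · obtain ⟨t, ht | ht, h⟩ := (hreach u).2
      · exact ⟨t, ht, h.mono le_sup_right (by omega)⟩
      · rw [hlen, add_comm]
        exact DiPathToLE.trans (h.mono le_sup_right le_rfl)
          ((hD₁.reach t ht).2.mono le_sup_left le_rfl)

end SimpleGraph

/-- **Chvátal–Thomassen.** Every 2-edge connected graph of radius `r`
admits a strong orientation of radius at most `r² + r`. -/
theorem chvatal_thomassen_radius {V : Type*} [Fintype V]
    (G : SimpleGraph V) (r : ℕ)
    (h2ec : TwoEdgeConnected G) (hrad : HasRadius G r) :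
    ∃ O : V → V → Prop, IsOrientation G O ∧
      ∃ c : V, ∀ u : V, DiPathLE O c u (r ^ 2 + r) ∧ DiPathLE O u c (r ^ 2 + r) := by
  obtain ⟨hconn, hbr⟩ := h2ec
  obtain ⟨-, ⟨c, hc⟩, -⟩ := hrad
  have hdom : KStepDom G {c} r := fun v =>
    let ⟨w, hw⟩ := hconn.exists_walk_length_eq_dist v c
    ⟨c, rfl, w, hw ▸ G.dist_comm ▸ hc v⟩
  obtain ⟨D, hD, hreach⟩ := SimpleGraph.exists_isPartialOrientation_diPathLE hbr hdom
  obtain ⟨O, hO, hDO⟩ := hD.exists_isOrientation_le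
  refine ⟨O, hO, c, fun u => ⟨?_, ?_⟩⟩
  · obtain ⟨_, rfl, h⟩ := (hreach u).1
    exact h.mono hDO le_rfl
  · obtain ⟨_, rfl, h⟩ := (hreach u).2
    exact h.mono hDO le_rfl
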